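/- arXiv:1710.00308 — 8 statements merged into one kernel-verified Lean document; each statement's English description precedes it below -/
import Mathlib

section
/- Let ε>0, k ≥ 1, and define f_ε: ℝ^k → ℝ by f_ε(x_1,…,x_k) = 1/(1 + Σ_{i=1}^k exp(-x_i/ε)). Then for arbitrary real sequences (x_1,…,x_k) and (x'_1,…,x'_k), f_ε(x_1,…,x_k) - f_ε(x'_1,…,x'_k) ≤ (1/(4ε)) Σ_{i=1}^k max(x_i - x'_i, 0). -/
/-!
Put `a i = exp (-x i / ε)`, `b i = exp (-x' i / ε)`, `A = ∑ a`, `B = ∑ b`. Then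
`f(x) - f(x') = ∑ (b i - a i) / ((1 + A) (1 + B))`; discarding the negative terms and shrinking
the denominator of each remaining one to `(1 + a i) (1 + b i)` bounds this by the sum of the
positive parts of `σ(x i / ε) - σ(x' i / ε)`, where `σ` is the logistic sigmoid. Since
`σ' = σ (1 - σ) ≤ 1/4`, each of these is at most `max (x i - x' i) 0 / (4 ε)`.
-/

open Real Finset

namespace Real

lemma lipschitzWith_sigmoid : LipschitzWith 4⁻¹ sigmoid := by
  refine lipschitzWith_of_nnnorm_deriv_le (fun _ ↦ differentiableAt_sigmoid) fun t ↦ ?_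
  rw [deriv_sigmoid, ← NNReal.coe_le_coe, coe_nnnorm, norm_of_nonneg
    (mul_nonneg (sigmoid_nonneg t) (sub_nonneg.2 (sigmoid_le_one t)))]
  push_cast
  nlinarith [sq_nonneg (sigmoid t - 2⁻¹)]

lemma sigmoid_sub_sigmoid_le (s t : ℝ) : sigmoid s - sigmoid t ≤ max (s - t) 0 / 4 := by
  rcases le_total s t with hst | hts
  · exact (sub_nonpos.2 (sigmoid_le hst)).trans (by positivity)
  · calc sigmoid s - sigmoid t ≤ dist (sigmoid s) (sigmoid t) := le_abs_self _
      _ ≤ 4⁻¹ * dist s t := by exact_mod_cast lipschitzWith_sigmoid.dist_le_mul s t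
      _ = max (s - t) 0 / 4 := by
        rw [dist_eq, abs_of_nonneg (sub_nonneg.2 hts), max_eq_left (sub_nonneg.2 hts)]; ring

end Real

lemma sub_div_one_add_mul_one_add_le {a b A B : ℝ} (ha : 0 ≤ a) (hb : 0 ≤ b) (haA : a ≤ A)
    (hbB : b ≤ B) : (b - a) / ((1 + A) * (1 + B)) ≤ max ((1 + a)⁻¹ - (1 + b)⁻¹) 0 := by
  rcases le_total a b with hab | hba
  · calc (b - a) / ((1 + A) * (1 + B)) ≤ (b - a) / ((1 + a) * (1 + b)) := by gcongr; linarith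
      _ = (1 + a)⁻¹ - (1 + b)⁻¹ := by rw [inv_sub_inv (by positivity) (by positivity)]; ring
      _ ≤ _ := le_max_left _ _
  · exact (div_nonpos_of_nonpos_of_nonneg (by linarith) (by nlinarith)).trans (le_max_right _ _)

lemma inv_one_add_sum_sub_inv_one_add_sum_le {ι : Type*} {s : Finset ι} {a b : ι → ℝ}
    (ha : ∀ i ∈ s, 0 ≤ a i) (hb : ∀ i ∈ s, 0 ≤ b i) :
    (1 + ∑ i ∈ s, a i)⁻¹ - (1 + ∑ i ∈ s, b i)⁻¹ ≤ ∑ i ∈ s, max ((1 + a i)⁻¹ - (1 + b i)⁻¹) 0 := by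
  have hA := sum_nonneg ha
  have hB := sum_nonneg hb
  calc (1 + ∑ i ∈ s, a i)⁻¹ - (1 + ∑ i ∈ s, b i)⁻¹
      = ∑ i ∈ s, (b i - a i) / ((1 + ∑ i ∈ s, a i) * (1 + ∑ i ∈ s, b i)) := by
        rw [← sum_div, sum_sub_distrib, inv_sub_inv (by positivity) (by positivity)]; ring
    _ ≤ _ := sum_le_sum fun i hi ↦ sub_div_one_add_mul_one_add_le (ha i hi) (hb i hi)
        (single_le_sum ha hi) (single_le_sum hb hi)

theorem softmax_one_sided_lipschitz_general (ε : ℝ) (hε : 0 < ε) (k : ℕ)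
    (x x' : Fin k → ℝ) :
    1 / (1 + ∑ i, Real.exp (-(x i) / ε)) - 1 / (1 + ∑ i, Real.exp (-(x' i) / ε)) ≤
      (1 / (4 * ε)) * ∑ i, max (x i - x' i) 0 := by
  have term (i : Fin k) : max ((1 + exp (-x i / ε))⁻¹ - (1 + exp (-x' i / ε))⁻¹) 0 ≤
      1 / (4 * ε) * max (x i - x' i) 0 := by
    have h := sigmoid_sub_sigmoid_le (x i / ε) (x' i / ε)
    have hmax := max_div_div_right hε.le (x i - x' i) 0
    rw [zero_div] at hmax
    rw [← sub_div, hmax] at h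
    simp only [sigmoid_def, ← neg_div] at h
    refine max_le (h.trans_eq ?_) (by positivity)
    field_simp
  calc _ ≤ ∑ i, max ((1 + exp (-x i / ε))⁻¹ - (1 + exp (-x' i / ε))⁻¹) 0 := by
        simpa only [one_div] using inv_one_add_sum_sub_inv_one_add_sum_le
          (fun i _ ↦ (exp_pos (-x i / ε)).le) (fun i _ ↦ (exp_pos (-x' i / ε)).le)
    _ ≤ _ := (sum_le_sum fun i _ ↦ term i).trans_eq (mul_sum _ _ _).symm

theorem softmax_one_sided_lipschitz (ε : ℝ) (hε : 0 < ε) (k : ℕ) (hk : 1 ≤ k)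
    (x x' : Fin k → ℝ) :
    1 / (1 + ∑ i, Real.exp (-(x i) / ε)) - 1 / (1 + ∑ i, Real.exp (-(x' i) / ε)) ≤
      (1 / (4 * ε)) * ∑ i, max (x i - x' i) 0 :=
  softmax_one_sided_lipschitz_general ε hε k x x'
end

section
/- Let θ_1,…,θ_n and θ'_1,…,θ'_n be nonnegative reals with Σ_i θ_i = Σ_i θ'_i = 1, and let l_1,…,l_n and l'_1,…,l'_n be nonnegative reals such that for all i,j: l_i > l_j implies θ_i = 0, and l'_i > l'_j implies θ'_i = 0. Then Σ_{i=1}^n (θ_i - θ'_i)·1[l_i > l'_i] ≤ 0. -/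
/-! Let `S` be the set of indices with `l' i < l i`. If `θ` charged some `i ∈ S` and `θ'` charged
some `k ∉ S`, minimality of `l i` and of `l' k` would give `l i ≤ l k ≤ l' k ≤ l' i < l i`. So
either `θ(S) = 0 ≤ θ'(S)`, or `θ'(S) = 1 ≥ θ(S)`. -/

open Finset

section

variable {ι α M : Type*} [LinearOrder α]

lemma le_of_forall_lt_imp_eq_zero [Zero M] {θ : ι → M} {l : ι → α}
    (hmin : ∀ i j, l i > l j → θ i = 0) {i : ι} (hi : θ i ≠ 0) (j : ι) : l i ≤ l j :=
  le_of_not_gt fun h => hi (hmin i j h)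

lemma forall_eq_zero_or_forall_lt [Zero M] {θ θ' : ι → M} {l l' : ι → α}
    (hmin : ∀ i j, l i > l j → θ i = 0) (hmin' : ∀ i j, l' i > l' j → θ' i = 0) :
    (∀ i, l' i < l i → θ i = 0) ∨ ∀ k, θ' k ≠ 0 → l' k < l k := by
  by_contra! ⟨⟨i, hi_lt, hi⟩, ⟨k, hk, hk_le⟩⟩
  exact hi_lt.not_ge <| ((le_of_forall_lt_imp_eq_zero hmin hi k).trans hk_le).trans
    (le_of_forall_lt_imp_eq_zero hmin' hk i)

lemma sum_filter_lt_le_sum_filter_lt [Fintype ι] [AddCommMonoid M] [PartialOrder M]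
    [IsOrderedAddMonoid M] {θ θ' : ι → M} {l l' : ι → α}
    (hθ : ∀ i, 0 ≤ θ i) (hθ' : ∀ i, 0 ≤ θ' i) (hsum : ∑ i, θ i = ∑ i, θ' i)
    (hmin : ∀ i j, l i > l j → θ i = 0) (hmin' : ∀ i j, l' i > l' j → θ' i = 0) :
    ∑ i with l' i < l i, θ i ≤ ∑ i with l' i < l i, θ' i := by
  rcases forall_eq_zero_or_forall_lt hmin hmin' with hzero | hsupp
  · calc ∑ i with l' i < l i, θ i = 0 := sum_eq_zero fun i hi => hzero i (mem_filter.1 hi).2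
      _ ≤ _ := sum_nonneg fun i _ => hθ' i
  · calc ∑ i with l' i < l i, θ i ≤ ∑ i, θ i := sum_le_sum_of_subset_of_nonneg
          (filter_subset _ _) fun i _ _ => hθ i
      _ = ∑ i with l' i < l i, θ' i := by
          rw [hsum, sum_filter_of_ne fun k _ hk => hsupp k hk]

end

theorem balanced_comparison_nonpos_general (n : ℕ) (θ θ' l l' : Fin n → ℝ)
    (hθ : ∀ i, 0 ≤ θ i) (hθ' : ∀ i, 0 ≤ θ' i)
    (hsum : ∑ i, θ i = 1) (hsum' : ∑ i, θ' i = 1)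
    (hmin : ∀ i j, l i > l j → θ i = 0)
    (hmin' : ∀ i j, l' i > l' j → θ' i = 0) :
    ∑ i, (θ i - θ' i) * (if l i > l' i then (1 : ℝ) else 0) ≤ 0 := by
  simp only [mul_ite, mul_one, mul_zero, gt_iff_lt, ← sum_filter, sum_sub_distrib, sub_nonpos]
  exact sum_filter_lt_le_sum_filter_lt hθ hθ' (hsum.trans hsum'.symm) hmin hmin'

theorem balanced_comparison_nonpos (n : ℕ) (θ θ' l l' : Fin n → ℝ)
    (hθ : ∀ i, 0 ≤ θ i) (hθ' : ∀ i, 0 ≤ θ' i)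
    (hl : ∀ i, 0 ≤ l i) (hl' : ∀ i, 0 ≤ l' i)
    (hsum : ∑ i, θ i = 1) (hsum' : ∑ i, θ' i = 1)
    (hmin : ∀ i j, l i > l j → θ i = 0)
    (hmin' : ∀ i j, l' i > l' j → θ' i = 0) :
    ∑ i, (θ i - θ' i) * (if l i > l' i then (1 : ℝ) else 0) ≤ 0 :=
  balanced_comparison_nonpos_general n θ θ' l l' hθ hθ' hsum hsum' hmin hmin'
end

section
/- Let C > 0 and let (g_n) be a sequence in Υ(C) converging pointwise to a function g: ℝ → ℝ. Then g ∈ Υ(C), and for every t not in the union of the discontinuity sets of the g_n⁻¹ and of g⁻¹, one has g_n⁻¹(t) → g⁻¹(t). -/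
/-!
Each condition defining Υ(C) is a non-strict inequality between pointwise values, so Υ(C) is
closed under pointwise limits. A function h ∈ Υ(C) is a continuous surjection with
x ≤ h x ≤ x + C, so its level sets are nonempty, closed and bounded above, and h⁻¹ is the upper
adjoint of h: h x ≤ t ↔ x ≤ h⁻¹ t. If g⁻¹ is continuous at t, then g⁻¹ t is squeezed between
points y₁ = g⁻¹ s₁ and y₂ = g⁻¹ s₂ with s₁ < t < s₂; pointwise convergence gives
gₙ y₁ < t < gₙ y₂ eventually, and the adjunction turns this into y₁ ≤ gₙ⁻¹ t < y₂.
-/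

open Filter Topology

def UpsilonClass (C : ℝ) (g : ℝ → ℝ) : Prop :=
  Monotone g ∧ (∀ x y : ℝ, x ≤ y → g y - g x ≤ y - x) ∧
    ∀ x : ℝ, 0 ≤ g x - x ∧ g x - x ≤ C

noncomputable def upsilonInv (g : ℝ → ℝ) (t : ℝ) : ℝ :=
  sSup {x : ℝ | g x = t}

namespace UpsilonClass

variable {C : ℝ} {h : ℝ → ℝ}

theorem of_tendsto {ι : Type*} {l : Filter ι} [l.NeBot] {gn : ι → ℝ → ℝ} {g : ℝ → ℝ}
    (hgn : ∀ i, UpsilonClass C (gn i)) (hlim : ∀ x, Tendsto (fun i => gn i x) l (𝓝 (g x))) :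
    UpsilonClass C g := by
  refine ⟨fun x y hxy => ?_, fun x y hxy => ?_, fun x => ?_⟩
  · exact le_of_tendsto_of_tendsto' (hlim x) (hlim y) fun i => (hgn i).1 hxy
  · exact le_of_tendsto' ((hlim y).sub (hlim x)) fun i => (hgn i).2.1 x y hxy
  · have hsub : Tendsto (fun i => gn i x - x) l (𝓝 (g x - x)) := (hlim x).sub_const x
    exact ⟨ge_of_tendsto' hsub fun i => ((hgn i).2.2 x).1,
      le_of_tendsto' hsub fun i => ((hgn i).2.2 x).2⟩

theorem lipschitzWith (hh : UpsilonClass C h) : LipschitzWith 1 h := by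
  refine LipschitzWith.of_le_add fun x y => ?_
  rcases le_total x y with hxy | hyx
  · linarith [hh.1 hxy, dist_nonneg (x := x) (y := y)]
  · linarith [hh.2.1 y x hyx, Real.dist_eq x y, le_abs_self (x - y)]

theorem continuous (hh : UpsilonClass C h) : Continuous h :=
  hh.lipschitzWith.continuous

theorem surjective (hh : UpsilonClass C h) : Function.Surjective h := by
  refine hh.continuous.surjective (tendsto_atTop_mono (fun x => ?_) tendsto_id)
    (tendsto_atBot_mono (fun x => ?_) (tendsto_atBot_add_const_right _ C tendsto_id))
  · linarith [(hh.2.2 x).1, id_eq x]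
  · linarith [(hh.2.2 x).2, id_eq x]

theorem bddAbove_preimage (hh : UpsilonClass C h) (t : ℝ) : BddAbove {x | h x = t} :=
  ⟨t, fun x (hx : h x = t) => by linarith [(hh.2.2 x).1]⟩

theorem apply_upsilonInv (hh : UpsilonClass C h) (t : ℝ) : h (upsilonInv h t) = t :=
  (isClosed_eq hh.continuous continuous_const).csSup_mem (hh.surjective t)
    (hh.bddAbove_preimage t)

theorem gc (hh : UpsilonClass C h) : GaloisConnection h (upsilonInv h) := by
  intro x t
  refine ⟨fun hxt => le_of_not_gt fun hlt => ?_, fun hx => hh.apply_upsilonInv t ▸ hh.1 hx⟩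
  have hxt' : h x = t := le_antisymm hxt (hh.apply_upsilonInv t ▸ hh.1 hlt.le)
  exact hlt.not_ge (le_csSup (hh.bddAbove_preimage t) hxt')

end UpsilonClass

theorem tendsto_upsilonInv_of_tendsto {ι : Type*} {l : Filter ι} {C : ℝ} {gn : ι → ℝ → ℝ}
    {g : ℝ → ℝ} (hgn : ∀ i, UpsilonClass C (gn i)) (hg : UpsilonClass C g)
    (hlim : ∀ x, Tendsto (fun i => gn i x) l (𝓝 (g x))) {t : ℝ}
    (ht : ContinuousAt (upsilonInv g) t) :
    Tendsto (fun i => upsilonInv (gn i) t) l (𝓝 (upsilonInv g t)) := by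
  refine tendsto_order.2 ⟨fun a ha => ?_, fun b hb => ?_⟩
  · obtain ⟨s, has, hst⟩ : ∃ s, a < upsilonInv g s ∧ s < t :=
      (((ht.mono_left nhdsWithin_le_nhds).eventually (lt_mem_nhds ha)).and
        (self_mem_nhdsWithin (s := Set.Iio t))).exists
    have hbelow : ∀ᶠ i in l, gn i (upsilonInv g s) < t :=
      (hlim _).eventually_lt_const (by rwa [hg.apply_upsilonInv])
    filter_upwards [hbelow] with i hi
    exact has.trans_le (((hgn i).gc _ _).1 hi.le)
  · obtain ⟨s, hsb, hts⟩ : ∃ s, upsilonInv g s < b ∧ t < s :=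
      (((ht.mono_left nhdsWithin_le_nhds).eventually (gt_mem_nhds hb)).and
        (self_mem_nhdsWithin (s := Set.Ioi t))).exists
    have habove : ∀ᶠ i in l, t < gn i (upsilonInv g s) :=
      (hlim _).eventually_const_lt (by rwa [hg.apply_upsilonInv])
    filter_upwards [habove] with i hi
    exact ((hgn i).gc.lt_iff_lt.1 hi).trans hsb

theorem upsilon_pointwise_limit_general (C : ℝ)
    (gn : ℕ → ℝ → ℝ) (g : ℝ → ℝ)
    (hgn : ∀ n, UpsilonClass C (gn n))
    (hlim : ∀ x : ℝ, Filter.Tendsto (fun n => gn n x) Filter.atTop (nhds (g x))) :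
    UpsilonClass C g ∧
      ∀ t : ℝ, ContinuousAt (upsilonInv g) t →
        (∀ n, ContinuousAt (upsilonInv (gn n)) t) →
        Filter.Tendsto (fun n => upsilonInv (gn n) t) Filter.atTop
          (nhds (upsilonInv g t)) := by
  have hg : UpsilonClass C g := UpsilonClass.of_tendsto hgn hlim
  exact ⟨hg, fun t ht _ => tendsto_upsilonInv_of_tendsto hgn hg hlim ht⟩

theorem upsilon_pointwise_limit (C : ℝ) (hC : 0 < C)
    (gn : ℕ → ℝ → ℝ) (g : ℝ → ℝ)
    (hgn : ∀ n, UpsilonClass C (gn n))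
    (hlim : ∀ x : ℝ, Filter.Tendsto (fun n => gn n x) Filter.atTop (nhds (g x))) :
    UpsilonClass C g ∧
      ∀ t : ℝ, ContinuousAt (upsilonInv g) t →
        (∀ n, ContinuousAt (upsilonInv (gn n)) t) →
        Filter.Tendsto (fun n => upsilonInv (gn n) t) Filter.atTop
          (nhds (upsilonInv g t)) :=
  upsilon_pointwise_limit_general C gn g hgn hlim
end

section
/- Let H = ⟨V, E⟩ be a (possibly infinite) locally finite hypergraph, b: V → ℝ a baseload function, and let θ and θ' be two balanced allocations on H with respect to b, i.e. functions θ: {(e,i) : e ∈ E, i ∈ e} → [0,1] with Σ_{j∈e} θ(e,j) = 1 for every e, such that for all e ∈ E and i,j ∈ e, if ∂_b θ(i) > ∂_b θ(j) then θ(e,i) = 0 (where ∂_b θ(i) := b(i) + Σ_{e ∋ i} θ(e,i)), and similarly for θ'. If Σ_{i ∈ V} |∂_b θ(i) − ∂_b θ'(i)| < ∞, then ∂_b θ(i) = ∂_b θ'(i) for all i ∈ V. -/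
/-!
Let `D = ∂θ - ∂θ'` and suppose `D i > 0`. Since `D` tends to `0`, the superlevel set
`S = {j | D i ≤ D j}` is finite, and `D` is strictly smaller off `S` than on it. On every edge `e`,
balancedness forces `θ` to put at most as much mass on `S ∩ e` as `θ'`: if `θ'` loads some
`j ∈ e \ S`, then `∂θ' j ≤ ∂θ' k` for all `k ∈ S ∩ e`, hence `∂θ j < ∂θ k` and `θ` vanishes on
`S ∩ e`; otherwise `θ'` puts its whole unit on `S ∩ e`. Summing over the finitely many edges
meeting `S` gives `∑_{j ∈ S} D j ≤ 0`, a contradiction. By symmetry `D = 0`.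
-/

/-- Total load at vertex `i` with baseload `b`: `b i` plus the sum of the loads
assigned to `i` by the edges containing `i`. -/
noncomputable def loadWith {V : Type*} (E : Set (Finset V)) (b : V → ℝ)
    (θ : Finset V → V → ℝ) (i : V) : ℝ :=
  b i + ∑' e : {e : Finset V // e ∈ E ∧ i ∈ e}, θ e.1 i

open Filter Topology Finset

section
variable {V : Type*}

lemma loadWith_eq_sum (E : Set (Finset V)) (hloc : ∀ i : V, {e ∈ E | i ∈ e}.Finite)
    (b : V → ℝ) (θ : Finset V → V → ℝ) (i : V) :
    loadWith E b θ i = b i + ∑ e ∈ (hloc i).toFinset, θ e i := by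
  rw [← Finset.tsum_subtype]
  exact congrArg (b i + ·) (tsum_congr_set_coe (fun e => θ e i) (hloc i).coe_toFinset.symm)

lemma finite_setOf_le_of_tendsto_cofinite_zero {f : V → ℝ} (hf : Tendsto f cofinite (𝓝 0))
    {a : ℝ} (ha : 0 < a) : {x | a ≤ f x}.Finite := by
  simpa only [not_lt] using eventually_cofinite.1 (hf.eventually (gt_mem_nhds ha))

lemma sum_filter_le_sum_filter_of_balanced {e : Finset V} {p : V → Prop} [DecidablePred p]
    {θ θ' u u' : V → ℝ} (hθ0 : ∀ i ∈ e, 0 ≤ θ i) (hθ'0 : ∀ i ∈ e, 0 ≤ θ' i)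
    (hsum : ∑ i ∈ e, θ i ≤ ∑ i ∈ e, θ' i)
    (hbal : ∀ i ∈ e, ∀ j ∈ e, u i > u j → θ i = 0)
    (hbal' : ∀ i ∈ e, ∀ j ∈ e, u' i > u' j → θ' i = 0)
    (hsep : ∀ i ∈ e, ∀ j ∈ e, p i → ¬ p j → u j - u' j < u i - u' i) :
    ∑ i ∈ e with p i, θ i ≤ ∑ i ∈ e with p i, θ' i := by
  by_cases hout : ∃ j ∈ e, ¬ p j ∧ θ' j ≠ 0
  · obtain ⟨j, hje, hpj, hθ'j⟩ := hout
    have hzero : ∀ i ∈ e.filter p, θ i = 0 := by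
      intro i hi
      obtain ⟨hie, hpi⟩ := mem_filter.1 hi
      have hu' : u' j ≤ u' i := not_lt.1 fun h => hθ'j (hbal' j hje i hie h)
      exact hbal i hie j hje (by linarith [hsep i hie j hje hpi hpj])
    rw [sum_eq_zero hzero]
    exact sum_nonneg fun i hi => hθ'0 i (mem_filter.1 hi).1
  · push Not at hout
    calc ∑ i ∈ e with p i, θ i ≤ ∑ i ∈ e, θ i :=
          sum_le_sum_of_subset_of_nonneg (filter_subset _ _) fun i hi _ => hθ0 i hi
      _ ≤ ∑ i ∈ e, θ' i := hsum
      _ = ∑ i ∈ e with p i, θ' i :=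
          (sum_filter_of_ne fun i hi h => by_contra fun hpi => h (hout i hi hpi)).symm

lemma sum_sum_incident_nonpos [DecidableEq V] (E : Set (Finset V))
    (hloc : ∀ i : V, {e ∈ E | i ∈ e}.Finite) (S : Finset V) (f : Finset V → V → ℝ)
    (h : ∀ e ∈ E, ∑ i ∈ e with i ∈ S, f e i ≤ 0) :
    ∑ i ∈ S, ∑ e ∈ (hloc i).toFinset, f e i ≤ 0 := by
  rw [sum_comm' (t' := S.biUnion fun i => (hloc i).toFinset) (s' := fun e => e.filter (· ∈ S))]
  · refine sum_nonpos fun e he => h e ?_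
    obtain ⟨i, -, hi⟩ := mem_biUnion.1 he
    exact ((hloc i).mem_toFinset.1 hi).1
  · intro i e
    simp only [Set.Finite.mem_toFinset, Set.mem_ofPred_eq, mem_filter, mem_biUnion]
    exact ⟨fun ⟨hi, he, hie⟩ => ⟨⟨hie, hi⟩, i, hi, he, hie⟩,
      fun ⟨⟨hie, hi⟩, _, _, he, _⟩ => ⟨hi, he, hie⟩⟩

lemma loadWith_le_of_tendsto_cofinite (E : Set (Finset V))
    (hloc : ∀ i : V, {e ∈ E | i ∈ e}.Finite) (b : V → ℝ) (θ θ' : Finset V → V → ℝ)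
    (hθ0 : ∀ e ∈ E, ∀ i ∈ e, 0 ≤ θ e i) (hθ'0 : ∀ e ∈ E, ∀ i ∈ e, 0 ≤ θ' e i)
    (hsum : ∀ e ∈ E, ∑ j ∈ e, θ e j ≤ ∑ j ∈ e, θ' e j)
    (hbal : ∀ e ∈ E, ∀ i ∈ e, ∀ j ∈ e, loadWith E b θ i > loadWith E b θ j → θ e i = 0)
    (hbal' : ∀ e ∈ E, ∀ i ∈ e, ∀ j ∈ e, loadWith E b θ' i > loadWith E b θ' j → θ' e i = 0)
    (hD : Tendsto (fun i => loadWith E b θ i - loadWith E b θ' i) cofinite (𝓝 0)) (i : V) :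
    loadWith E b θ i ≤ loadWith E b θ' i := by
  classical
  set D := fun i => loadWith E b θ i - loadWith E b θ' i with hD_def
  by_contra! hi
  replace hi : 0 < D i := sub_pos.2 hi
  set S := (finite_setOf_le_of_tendsto_cofinite_zero hD hi).toFinset
  have hmemS : ∀ j, j ∈ S ↔ D i ≤ D j := fun j => Set.Finite.mem_toFinset _
  have hedge : ∀ e ∈ E, ∑ j ∈ e with j ∈ S, (θ e j - θ' e j) ≤ 0 := by
    intro e he
    rw [sum_sub_distrib, sub_nonpos]
    refine sum_filter_le_sum_filter_of_balanced (hθ0 e he) (hθ'0 e he) (hsum e he)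
      (hbal e he) (hbal' e he) fun j _ k _ hj hk => ?_
    rw [hmemS] at hj hk
    exact (not_le.1 hk).trans_le hj
  have hDS : ∑ j ∈ S, D j ≤ 0 := by
    simpa only [hD_def, loadWith_eq_sum E hloc, add_sub_add_left_eq_sub, ← sum_sub_distrib]
      using sum_sum_incident_nonpos E hloc S _ hedge
  have hDS_pos : 0 < ∑ j ∈ S, D j :=
    sum_pos (fun j hj => hi.trans_le ((hmemS j).1 hj)) ⟨i, (hmemS i).2 le_rfl⟩
  exact hDS.not_gt hDS_pos

end

theorem weak_uniqueness_of_balanced_allocations_general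
    {V : Type*} (E : Set (Finset V))
    (hloc : ∀ i : V, {e ∈ E | i ∈ e}.Finite)
    (b : V → ℝ) (θ θ' : Finset V → V → ℝ)
    (hθ0 : ∀ e ∈ E, ∀ i ∈ e, 0 ≤ θ e i)
    (hθsum : ∀ e ∈ E, ∑ j ∈ e, θ e j = 1)
    (hθ'0 : ∀ e ∈ E, ∀ i ∈ e, 0 ≤ θ' e i)
    (hθ'sum : ∀ e ∈ E, ∑ j ∈ e, θ' e j = 1)
    (hbal : ∀ e ∈ E, ∀ i ∈ e, ∀ j ∈ e,
      loadWith E b θ i > loadWith E b θ j → θ e i = 0)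
    (hbal' : ∀ e ∈ E, ∀ i ∈ e, ∀ j ∈ e,
      loadWith E b θ' i > loadWith E b θ' j → θ' e i = 0)
    (hsummable : Summable fun i : V => |loadWith E b θ i - loadWith E b θ' i|) :
    ∀ i : V, loadWith E b θ i = loadWith E b θ' i := by
  have hD := (Summable.of_abs hsummable).tendsto_cofinite_zero
  have hD' : Tendsto (fun i => loadWith E b θ' i - loadWith E b θ i) cofinite (𝓝 0) := by
    simpa only [neg_sub, neg_zero] using hD.neg
  intro i
  exact le_antisymm
    (loadWith_le_of_tendsto_cofinite E hloc b θ θ' hθ0 hθ'0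
      (fun e he => ((hθsum e he).trans (hθ'sum e he).symm).le) hbal hbal' hD i)
    (loadWith_le_of_tendsto_cofinite E hloc b θ' θ hθ'0 hθ0
      (fun e he => ((hθ'sum e he).trans (hθsum e he).symm).le) hbal' hbal hD' i)

theorem weak_uniqueness_of_balanced_allocations
    {V : Type*} [Countable V] (E : Set (Finset V))
    (hloc : ∀ i : V, {e ∈ E | i ∈ e}.Finite)
    (b : V → ℝ) (θ θ' : Finset V → V → ℝ)
    (hθ0 : ∀ e ∈ E, ∀ i ∈ e, 0 ≤ θ e i) (hθ1 : ∀ e ∈ E, ∀ i ∈ e, θ e i ≤ 1)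
    (hθsum : ∀ e ∈ E, ∑ j ∈ e, θ e j = 1)
    (hθ'0 : ∀ e ∈ E, ∀ i ∈ e, 0 ≤ θ' e i) (hθ'1 : ∀ e ∈ E, ∀ i ∈ e, θ' e i ≤ 1)
    (hθ'sum : ∀ e ∈ E, ∑ j ∈ e, θ' e j = 1)
    (hbal : ∀ e ∈ E, ∀ i ∈ e, ∀ j ∈ e,
      loadWith E b θ i > loadWith E b θ j → θ e i = 0)
    (hbal' : ∀ e ∈ E, ∀ i ∈ e, ∀ j ∈ e,
      loadWith E b θ' i > loadWith E b θ' j → θ' e i = 0)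
    (hsummable : Summable fun i : V => |loadWith E b θ i - loadWith E b θ' i|) :
    ∀ i : V, loadWith E b θ i = loadWith E b θ' i :=
  weak_uniqueness_of_balanced_allocations_general E hloc b θ θ' hθ0 hθsum hθ'0 hθ'sum hbal hbal'
    hsummable
end

section
/- Let T be a finite hypertree whose every edge has size c ≥ 2 and which has M ≥ 1 edges. Then T has exactly 1 + M(c−1) vertices, and there exists a balanced allocation θ on T (with zero baseload) under which every vertex receives total load exactly M/(1 + M(c−1)). -/
/-- A closed path `i₀, e₁, i₁, …, eₙ, iₙ` (with `n ≥ 2`) in which the vertices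
`i₁, …, iₙ` are distinct and the edges `e₁, …, eₙ` are distinct. -/
def HasClosedPath {V : Type*} (E : Finset (Finset V)) : Prop :=
  ∃ n : ℕ, 2 ≤ n ∧ ∃ v : Fin (n + 1) → V, ∃ e : Fin n → Finset V,
    (∀ k : Fin n, e k ∈ E) ∧
    (∀ k : Fin n, v k.castSucc ∈ e k ∧ v k.succ ∈ e k) ∧
    v 0 = v (Fin.last n) ∧
    Function.Injective (fun k : Fin n => v k.succ) ∧
    Function.Injective e

/-!
Under the hypertree axioms the bipartite incidence graph `G` of `T` (on the vertices and the
edges of `T`, a vertex joined to the edges containing it) is a tree. Counting its nodes,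
`|V| + M`, against its `c M` edges gives `|V| = 1 + M (c - 1)`.

For the allocation, edge `f` gives its vertex `i` the share `#{g | d(f, g) < d(i, g)} / |V|`,
with `d` the distance in `G`. In a tree, every node `y ≠ x` is strictly closer to exactly one
neighbour of `x` than to `x`, and strictly farther from all the others. At a vertex `v` this says
that every edge `g` is counted by exactly one edge `f ∋ v`, so every load is `M / |V|`, and
equal loads make the allocation balanced. At an edge `f` it says that `f` hands out
`c M - (M - 1) = |V|` shares.
-/

open Finset

namespace SimpleGraph

variable {α : Type*} {G : SimpleGraph α}

theorem IsTree.existsUnique_adj_dist_lt (hG : G.IsTree) {x y : α} (hxy : x ≠ y) :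
    ∃! z, G.Adj x z ∧ G.dist z y < G.dist x y := by
  classical
  obtain ⟨p, hp, hpl⟩ := (hG.connected x y).exists_path_of_dist
  have hnil : ¬ p.Nil := fun h => hxy h.eq
  refine ⟨p.snd, ⟨p.adj_snd hnil, ?_⟩, ?_⟩
  · have := dist_le p.tail
    have := p.length_tail_add_one hnil
    omega
  · rintro z ⟨hxz, hz⟩
    obtain ⟨q, hq, hql⟩ := (hG.connected z y).exists_path_of_dist
    have hx : x ∉ q.support := fun hx => by
      have := dist_le (q.dropUntil x hx)
      have := q.length_dropUntil_le_length hx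
      omega
    have hpq : p = q.cons hxz :=
      congrArg Subtype.val
        ((hG.isAcyclic.subsingleton_path x y).elim ⟨p, hp⟩ ⟨_, hq.cons hx⟩)
    simp [hpq]

variable [Fintype α] [DecidableRel G.Adj]

theorem IsTree.card_filter_neighborFinset_dist_lt (hG : G.IsTree) {x y : α} (hxy : x ≠ y) :
    #{z ∈ G.neighborFinset x | G.dist z y < G.dist x y} = 1 := by
  rw [card_eq_one_iff_existsUnique]
  simpa only [mem_filter, mem_neighborFinset] using hG.existsUnique_adj_dist_lt hxy

theorem IsTree.card_filter_neighborFinset_dist_gt_add_dist_lt (hG : G.IsTree) (x y : α) :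
    #{z ∈ G.neighborFinset x | G.dist x y < G.dist z y} +
      #{z ∈ G.neighborFinset x | G.dist z y < G.dist x y} = G.degree x := by
  rw [← card_neighborFinset_eq_degree,
    ← card_filter_add_card_filter_not (s := G.neighborFinset x) (p := (G.dist x y < G.dist · y))]
  congr 2
  refine filter_congr fun z hz => ?_
  have := hG.dist_ne_of_adj y ((mem_neighborFinset _ _ _).mp hz)
  rw [dist_comm, G.dist_comm (u := y)] at this
  omega

end SimpleGraph

open SimpleGraph

section

variable {V : Type*} (E : Finset (Finset V))

def incidenceGraph : SimpleGraph (V ⊕ E) where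
  Adj
    | .inl v, .inr e => v ∈ e.1
    | .inr e, .inl v => v ∈ e.1
    | _, _ => False
  symm := ⟨by rintro (_ | _) (_ | _) h <;> exact h⟩
  loopless := ⟨by rintro (_ | _) h <;> exact h⟩

namespace incidenceGraph

variable {E}

@[simp] theorem adj_inl_inr {v : V} {e : E} :
    (incidenceGraph E).Adj (.inl v) (.inr e) ↔ v ∈ e.1 := Iff.rfl

@[simp] theorem adj_inr_inl {v : V} {e : E} :
    (incidenceGraph E).Adj (.inr e) (.inl v) ↔ v ∈ e.1 := Iff.rfl

@[simp] theorem not_adj_inl_inl {v w : V} : ¬ (incidenceGraph E).Adj (.inl v) (.inl w) := id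

@[simp] theorem not_adj_inr_inr {e f : E} : ¬ (incidenceGraph E).Adj (.inr e) (.inr f) := id

instance [DecidableEq V] : DecidableRel (incidenceGraph E).Adj
  | .inl v, .inr e => decidable_of_iff (v ∈ e.1) adj_inl_inr.symm
  | .inr e, .inl v => decidable_of_iff (v ∈ e.1) adj_inr_inl.symm
  | .inl _, .inl _ => isFalse not_adj_inl_inl
  | .inr _, .inr _ => isFalse not_adj_inr_inr

theorem isLeft_iff_not_isLeft_of_adj {a b : V ⊕ E} (h : (incidenceGraph E).Adj a b) :
    a.isLeft ↔ ¬ b.isLeft := by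
  rcases a with _ | _ <;> rcases b with _ | _ <;> simp_all

theorem getVert_isLeft_iff_even {a : V} {y : V ⊕ E} (w : (incidenceGraph E).Walk (.inl a) y)
    {k : ℕ} (hk : k ≤ w.length) : (w.getVert k).isLeft ↔ Even k := by
  induction k with
  | zero => simp
  | succ k ih =>
    rw [isLeft_iff_not_isLeft_of_adj (w.adj_getVert_succ (by omega)).symm, ih (by omega),
      Nat.even_add_one]

theorem hasClosedPath_of_isCycle {a : V} {c : (incidenceGraph E).Walk (.inl a) (.inl a)}
    (hc : c.IsCycle) : HasClosedPath E := by
  obtain ⟨n, hn⟩ : Even c.length :=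
    (getVert_isLeft_iff_even c le_rfl).mp (by simp)
  have h3 := hc.three_le_length
  have hleft : ∀ k ≤ n, ∃ x, c.getVert (2 * k) = .inl x := fun k hk =>
    Sum.isLeft_iff.mp ((getVert_isLeft_iff_even c (by omega)).mpr (even_two_mul k))
  have hright : ∀ k < n, ∃ f, c.getVert (2 * k + 1) = .inr f := fun k hk =>
    Sum.isRight_iff.mp (Sum.not_isLeft.mp (by
      rw [getVert_isLeft_iff_even c (by omega), Nat.not_even_iff_odd]; exact odd_two_mul_add_one k))
  have : Nonempty V := ⟨a⟩
  have : Nonempty E := ⟨(hright 0 (by omega)).choose⟩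
  choose! vert hvert using hleft
  choose! edge hedge using hright
  have hinj {k l : ℕ} (hk : 1 ≤ k ∧ k ≤ c.length) (hl : 1 ≤ l ∧ l ≤ c.length)
      (h : c.getVert k = c.getVert l) : k = l := hc.getVert_injOn hk hl h
  refine ⟨n, by omega, fun k => vert k, fun k => (edge k).1, fun k => (edge k).2,
    fun k => ⟨?_, ?_⟩, ?_, fun k l h => ?_, fun k l h => ?_⟩
  · simpa [hvert k (by omega), hedge k k.2] using c.adj_getVert_succ (i := 2 * k) (by omega)
  · have := c.adj_getVert_succ (i := 2 * k + 1) (by omega)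
    rwa [hedge k k.2, show 2 * (k : ℕ) + 1 + 1 = 2 * (k + 1) by ring,
      hvert (k + 1) (by omega), adj_inr_inl] at this
  · have h0 := hvert 0 (by omega)
    have hlast := hvert n le_rfl
    rw [mul_zero, c.getVert_zero] at h0
    rw [show 2 * n = c.length by omega, c.getVert_length] at hlast
    exact Sum.inl_injective (h0.symm.trans hlast)
  · have := hinj (k := 2 * (k + 1)) (l := 2 * (l + 1)) (by omega) (by omega)
      (by simp only at h
          rw [hvert _ (by omega), hvert _ (by omega), ← Fin.val_succ, ← Fin.val_succ, h])
    exact Fin.ext (by simpa using this)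
  · have := hinj (k := 2 * k + 1) (l := 2 * l + 1) (by omega) (by omega)
      (by rw [hedge k k.2, hedge l l.2, Subtype.ext h])
    exact Fin.ext (by omega)

theorem isAcyclic (h : ¬ HasClosedPath E) : (incidenceGraph E).IsAcyclic := by
  classical
  rintro (a | e) c hc
  · exact h (hasClosedPath_of_isCycle hc)
  · obtain ⟨a, ha⟩ : ∃ a, c.snd = .inl a := Sum.isLeft_iff.mp <| by
      rw [isLeft_iff_not_isLeft_of_adj (c.adj_snd hc.not_nil).symm]; simp
    have hmem : .inl a ∈ c.support := ha ▸ c.getVert_mem_support 1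
    exact h (hasClosedPath_of_isCycle (hc.rotate hmem))

theorem connected (hE : E.Nonempty) (hne : ∀ e ∈ E, e.Nonempty)
    (hconn : ∀ u w : V, Relation.ReflTransGen (fun a b => ∃ e ∈ E, a ∈ e ∧ b ∈ e) u w) :
    (incidenceGraph E).Connected := by
  have hinl (u w : V) : (incidenceGraph E).Reachable (.inl u) (.inl w) := by
    induction hconn u w with
    | refl => rfl
    | tail _ hstep ih =>
      obtain ⟨e, he, ha, hb⟩ := hstep
      exact ih.trans ((adj_inl_inr (e := ⟨e, he⟩)).mpr ha).reachable
        |>.trans ((adj_inr_inl (e := ⟨e, he⟩)).mpr hb).reachable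
  have hto_inl : ∀ x : V ⊕ E, ∃ u, (incidenceGraph E).Reachable x (.inl u)
    | .inl u => ⟨u, .rfl⟩
    | .inr e => (hne e.1 e.2).imp fun _ hu => (adj_inr_inl.mpr hu).reachable
  have : Nonempty (V ⊕ E) := ⟨.inr ⟨_, hE.choose_spec⟩⟩
  refine ⟨fun x y => ?_⟩
  obtain ⟨u, hu⟩ := hto_inl x
  obtain ⟨w, hw⟩ := hto_inl y
  exact hu.trans ((hinl u w).trans hw.symm)

theorem isTree (htree : ¬ HasClosedPath E) (hE : E.Nonempty) (hne : ∀ e ∈ E, e.Nonempty)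
    (hconn : ∀ u w : V, Relation.ReflTransGen (fun a b => ∃ e ∈ E, a ∈ e ∧ b ∈ e) u w) :
    (incidenceGraph E).IsTree :=
  ⟨connected hE hne hconn, isAcyclic htree⟩

variable [Fintype V] [DecidableEq V]

theorem neighborFinset_inl (v : V) :
    (incidenceGraph E).neighborFinset (.inl v) = ({e : E | v ∈ e.1} : Finset E).map .inr := by
  ext (_ | e) <;> simp

theorem neighborFinset_inr (e : E) :
    (incidenceGraph E).neighborFinset (.inr e) = e.1.map .inl := by
  ext (_ | f) <;> simp

theorem card_filter_neighborFinset_inl (v : V) (p : V ⊕ E → Prop) [DecidablePred p] :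
    #{z ∈ (incidenceGraph E).neighborFinset (.inl v) | p z} =
      #{f ∈ ({f : E | v ∈ f.1} : Finset E) | p (.inr f)} := by
  rw [neighborFinset_inl, filter_map, card_map]
  rfl

theorem card_filter_neighborFinset_inr (f : E) (p : V ⊕ E → Prop) [DecidablePred p] :
    #{z ∈ (incidenceGraph E).neighborFinset (.inr f) | p z} = #{i ∈ f.1 | p (.inl i)} := by
  rw [neighborFinset_inr, filter_map, card_map]
  rfl

theorem card_edgeFinset : #(incidenceGraph E).edgeFinset = ∑ e ∈ E, #e := by
  have hbip : (incidenceGraph E).IsBipartiteWith ↑(univ.map .inl : Finset (V ⊕ E))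
      ↑(univ.map .inr : Finset (V ⊕ E)) :=
    ⟨by simp [Set.disjoint_left], by rintro (_ | _) (_ | _) h <;> simp_all⟩
  rw [← isBipartiteWith_sum_degrees_eq_card_edges' hbip, sum_map, ← sum_coe_sort E]
  refine sum_congr rfl fun e _ => ?_
  rw [← card_neighborFinset_eq_degree]
  exact (congrArg card (neighborFinset_inr e)).trans (card_map _)

theorem card_add_card_eq_sum_card_add_one (hT : (incidenceGraph E).IsTree) :
    Fintype.card V + #E = ∑ e ∈ E, #e + 1 := by
  rw [← card_edgeFinset, hT.card_edgeFinset, Fintype.card_sum, Fintype.card_coe]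

theorem card_add_card_eq_mul_add_one (hT : (incidenceGraph E).IsTree) {c : ℕ}
    (hsize : ∀ e ∈ E, #e = c) : Fintype.card V + #E = c * #E + 1 := by
  rw [card_add_card_eq_sum_card_add_one hT, sum_congr rfl hsize, sum_const, smul_eq_mul, mul_comm]

noncomputable def closerEdges (f : E) (i : V) : Finset E :=
  {g | (incidenceGraph E).dist (.inr f) (.inr g) < (incidenceGraph E).dist (.inl i) (.inr g)}

theorem sum_card_closerEdges_inl (hT : (incidenceGraph E).IsTree) (v : V) :
    ∑ f : E with v ∈ f.1, #(closerEdges f v) = #E := by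
  have hcount (g : E) : #{f ∈ ({f : E | v ∈ f.1} : Finset E) |
      (incidenceGraph E).dist (.inr f) (.inr g) < (incidenceGraph E).dist (.inl v) (.inr g)} = 1 :=
    (card_filter_neighborFinset_inl v _).symm.trans
      (hT.card_filter_neighborFinset_dist_lt Sum.inl_ne_inr)
  refine (sum_card_bipartiteAbove_eq_sum_card_bipartiteBelow _).trans ?_
  simp only [bipartiteBelow, hcount, sum_const, card_univ, Fintype.card_coe, smul_eq_mul, mul_one]

theorem sum_card_closerEdges_inr (hT : (incidenceGraph E).IsTree) (f : E) :
    ∑ i ∈ f.1, #(closerEdges f i) + (#E - 1) = #f.1 * #E := by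
  set δ := (incidenceGraph E).dist
  have hsplit (g : E) : #{i ∈ f.1 | δ (.inr f) (.inr g) < δ (.inl i) (.inr g)} +
      #{i ∈ f.1 | δ (.inl i) (.inr g) < δ (.inr f) (.inr g)} = #f.1 := by
    have := hT.card_filter_neighborFinset_dist_gt_add_dist_lt (.inr f) (.inr g)
    rwa [card_filter_neighborFinset_inr, card_filter_neighborFinset_inr,
      ← card_neighborFinset_eq_degree, neighborFinset_inr, card_map] at this
  have hnear (g : E) :
      #{i ∈ f.1 | δ (.inl i) (.inr g) < δ (.inr f) (.inr g)} = if g = f then 0 else 1 := by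
    split_ifs with hgf
    · simp [hgf, δ]
    · exact (card_filter_neighborFinset_inr f _).symm.trans
        (hT.card_filter_neighborFinset_dist_lt (Sum.inr_injective.ne (Ne.symm hgf)))
  have hswap : ∑ i ∈ f.1, #(closerEdges f i) =
      ∑ g : E, #{i ∈ f.1 | δ (.inr f) (.inr g) < δ (.inl i) (.inr g)} :=
    sum_card_bipartiteAbove_eq_sum_card_bipartiteBelow _
  have hothers :
      ∑ g : E, #{i ∈ f.1 | δ (.inl i) (.inr g) < δ (.inr f) (.inr g)} = #E - 1 := by
    rw [sum_congr rfl fun g _ => hnear g]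
    simp [sum_ite, filter_ne']
  rw [hswap, ← hothers, ← sum_add_distrib]
  simp [hsplit, mul_comm]

variable (E) in
noncomputable def closerAllocation (f : Finset V) (i : V) : ℝ :=
  if hf : f ∈ E then #(closerEdges ⟨f, hf⟩ i) / Fintype.card V else 0

theorem closerAllocation_nonneg (f : Finset V) (i : V) : 0 ≤ closerAllocation E f i := by
  unfold closerAllocation
  split_ifs <;> positivity

theorem sum_filter_closerAllocation (hT : (incidenceGraph E).IsTree) (v : V) :
    ∑ f ∈ E with v ∈ f, closerAllocation E f v = #E / Fintype.card V := by
  rw [sum_filter, ← sum_coe_sort E, ← sum_filter]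
  simp only [closerAllocation, coe_mem, dif_pos, ← sum_div]
  rw [← Nat.cast_sum, sum_card_closerEdges_inl hT v]

theorem sum_closerAllocation [Nonempty V] (hT : (incidenceGraph E).IsTree) {c : ℕ}
    (hsize : ∀ e ∈ E, #e = c) {e : Finset V} (he : e ∈ E) :
    ∑ i ∈ e, closerAllocation E e i = 1 := by
  have hshares := sum_card_closerEdges_inr hT ⟨e, he⟩
  have hcard := card_add_card_eq_mul_add_one hT hsize
  have hE : 0 < #E := card_pos.mpr ⟨e, he⟩
  simp only [hsize e he] at hshares
  have hsum : ∑ i ∈ e, #(closerEdges ⟨e, he⟩ i) = Fintype.card V := by omega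
  simp only [closerAllocation, he, dif_pos, ← sum_div]
  rw [← Nat.cast_sum, hsum, div_self (by positivity)]

end incidenceGraph

end

theorem hypertree_uniform_balanced_allocation
    {V : Type*} [Fintype V] [DecidableEq V]
    (c M : ℕ) (hc : 2 ≤ c) (hM : 1 ≤ M)
    (E : Finset (Finset V)) (hcard : E.card = M)
    (hsize : ∀ e ∈ E, e.card = c)
    (htree : ¬ HasClosedPath E)
    (hconn : ∀ u w : V,
      Relation.ReflTransGen (fun a b => ∃ ed ∈ E, a ∈ ed ∧ b ∈ ed) u w) :
    Fintype.card V = 1 + M * (c - 1) ∧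
      ∃ θ : Finset V → V → ℝ,
        (∀ e ∈ E, ∀ i ∈ e, 0 ≤ θ e i) ∧
        (∀ e ∈ E, ∑ i ∈ e, θ e i = 1) ∧
        (∀ e ∈ E, ∀ i ∈ e, ∀ j ∈ e,
          (∑ f ∈ E.filter (fun f => i ∈ f), θ f i) >
              (∑ f ∈ E.filter (fun f => j ∈ f), θ f j) → θ e i = 0) ∧
        ∀ v : V, (∑ f ∈ E.filter (fun f => v ∈ f), θ f v) =
          (M : ℝ) / (1 + (M : ℝ) * ((c : ℝ) - 1)) := by
  have hne : ∀ e ∈ E, e.Nonempty := fun e he =>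
    card_pos.mp (by rw [hsize e he]; omega)
  obtain ⟨e₀, he₀⟩ : E.Nonempty := card_pos.mp (by omega)
  have : Nonempty V := (hne e₀ he₀).to_subtype.map Subtype.val
  have hT := incidenceGraph.isTree htree ⟨e₀, he₀⟩ hne hconn
  have hV : Fintype.card V = 1 + M * (c - 1) := by
    have := incidenceGraph.card_add_card_eq_mul_add_one hT hsize
    rw [hcard] at this
    rw [Nat.mul_sub_one, mul_comm]
    have : M ≤ c * M := Nat.le_mul_of_pos_left M (by omega)
    omega
  have hload (v : V) : ∑ f ∈ E with v ∈ f, incidenceGraph.closerAllocation E f v =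
      M / (1 + M * ((c : ℝ) - 1)) := by
    rw [incidenceGraph.sum_filter_closerAllocation hT, hV, hcard]
    push_cast [Nat.cast_sub (by omega : 1 ≤ c)]
    ring_nf
  refine ⟨hV, incidenceGraph.closerAllocation E,
    fun e _ i _ => incidenceGraph.closerAllocation_nonneg e i,
    fun e he => incidenceGraph.sum_closerAllocation hT hsize he, fun e _ i _ j _ hij => ?_, hload⟩
  rw [hload, hload] at hij
  exact absurd hij (lt_irrefl _)
end

section
/- Let H be a finite hypergraph and θ a balanced allocation on H (with zero baseload). Then the maximum total load equals the maximum edge density over nonempty subgraphs: max_{v ∈ V(H)} ∂θ(v) = max_{∅ ≠ S ⊆ V(H)} |E_H(S)| / |S|, where E_H(S) is the set of edges of H with all endpoints in S. -/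
/-!
Double counting gives `∑ v ∈ T, ∂θ(v) = ∑ e, ∑ v ∈ e ∩ T, θ(e, v)`, and each edge inside `T`
contributes exactly `1`, so `|E(T)| ≤ ∑ v ∈ T, ∂θ(v) ≤ |T| · max ∂θ`. Conversely, on the set `S`
of vertices of maximal load, balancedness forces every edge leaving `S` to put no load on `S`,
so equality holds throughout and the density of `S` is the maximal load.
-/

open Finset

namespace Hypergraph

variable {V : Type*} [DecidableEq V] (E : Finset (Finset V)) (θ : Finset V → V → ℝ)

def load (v : V) : ℝ := ∑ f ∈ E with v ∈ f, θ f v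

def inducedEdges (S : Finset V) : Finset (Finset V) := E.filter (· ⊆ S)

theorem sum_load_eq_sum_sum (T : Finset V) :
    ∑ v ∈ T, load E θ v = ∑ f ∈ E, ∑ v ∈ T with v ∈ f, θ f v := by
  simp only [load, sum_filter]
  exact sum_comm

variable {E θ}

theorem sum_filter_mem_eq_one {f T : Finset V} (hf : f ∈ E)
    (hθsum : ∀ e ∈ E, ∑ i ∈ e, θ e i = 1) (hfT : f ⊆ T) :
    ∑ v ∈ T with v ∈ f, θ f v = 1 := by
  rw [filter_mem_eq_inter, inter_eq_right.mpr hfT, hθsum f hf]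

theorem card_inducedEdges_le_sum_load (hθ0 : ∀ e ∈ E, ∀ i ∈ e, 0 ≤ θ e i)
    (hθsum : ∀ e ∈ E, ∑ i ∈ e, θ e i = 1) (T : Finset V) :
    ((inducedEdges E T).card : ℝ) ≤ ∑ v ∈ T, load E θ v := by
  rw [sum_load_eq_sum_sum, inducedEdges, card_eq_sum_ones, Nat.cast_sum, sum_filter]
  refine sum_le_sum fun f hf => ?_
  split_ifs with hfT
  · rw [sum_filter_mem_eq_one hf hθsum hfT, Nat.cast_one]
  · exact sum_nonneg fun v hv => hθ0 f hf v (mem_filter.mp hv).2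

/-- On a superlevel set of the load, balancedness makes the bound above an equality. -/
theorem sum_load_eq_card_inducedEdges (hθsum : ∀ e ∈ E, ∑ i ∈ e, θ e i = 1)
    (hbal : ∀ e ∈ E, ∀ i ∈ e, ∀ j ∈ e, load E θ j < load E θ i → θ e i = 0)
    {S : Finset V} (hS : ∀ i ∈ S, ∀ j ∉ S, load E θ j < load E θ i) :
    ∑ v ∈ S, load E θ v = (inducedEdges E S).card := by
  rw [sum_load_eq_sum_sum, inducedEdges, card_eq_sum_ones, Nat.cast_sum, sum_filter]
  refine sum_congr rfl fun f hf => ?_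
  split_ifs with hfS
  · rw [sum_filter_mem_eq_one hf hθsum hfS, Nat.cast_one]
  · obtain ⟨j, hjf, hjS⟩ := not_subset.mp hfS
    refine sum_eq_zero fun i hi => ?_
    obtain ⟨hiS, hif⟩ := mem_filter.mp hi
    exact hbal f hf i hif j hjf (hS i hiS j hjS)

theorem card_inducedEdges_div_card_le (hθ0 : ∀ e ∈ E, ∀ i ∈ e, 0 ≤ θ e i)
    (hθsum : ∀ e ∈ E, ∑ i ∈ e, θ e i = 1) {M : ℝ} (hM : ∀ v, load E θ v ≤ M)
    {T : Finset V} (hT : T.Nonempty) :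
    ((inducedEdges E T).card : ℝ) / T.card ≤ M := by
  rw [div_le_iff₀ (by exact_mod_cast hT.card_pos)]
  calc ((inducedEdges E T).card : ℝ) ≤ ∑ v ∈ T, load E θ v :=
        card_inducedEdges_le_sum_load hθ0 hθsum T
    _ ≤ ∑ _v ∈ T, M := sum_le_sum fun v _ => hM v
    _ = M * T.card := by rw [sum_const, nsmul_eq_mul, mul_comm]

theorem card_inducedEdges_div_card_eq (hθsum : ∀ e ∈ E, ∑ i ∈ e, θ e i = 1)
    (hbal : ∀ e ∈ E, ∀ i ∈ e, ∀ j ∈ e, load E θ j < load E θ i → θ e i = 0)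
    {M : ℝ} {S : Finset V} (hS : S.Nonempty) (hSM : ∀ v ∈ S, load E θ v = M)
    (hSc : ∀ v ∉ S, load E θ v < M) :
    ((inducedEdges E S).card : ℝ) / S.card = M := by
  have hsum := sum_load_eq_card_inducedEdges hθsum hbal
    fun i hi j hj => (hSM i hi).symm ▸ hSc j hj
  rw [← hsum, sum_congr rfl hSM, sum_const, nsmul_eq_mul,
    mul_div_cancel_left₀ _ (by exact_mod_cast hS.card_pos.ne')]

end Hypergraph

open Hypergraph in
theorem max_load_eq_max_edge_density
    {V : Type*} [Fintype V] [DecidableEq V] [Nonempty V]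
    (E : Finset (Finset V)) (θ : Finset V → V → ℝ)
    (hθ0 : ∀ e ∈ E, ∀ i ∈ e, 0 ≤ θ e i)
    (hθsum : ∀ e ∈ E, ∑ i ∈ e, θ e i = 1)
    (hbal : ∀ e ∈ E, ∀ i ∈ e, ∀ j ∈ e,
      (∑ f ∈ E.filter (fun f => i ∈ f), θ f i) >
          (∑ f ∈ E.filter (fun f => j ∈ f), θ f j) → θ e i = 0) :
    sSup (Set.range fun v : V => ∑ f ∈ E.filter (fun f => v ∈ f), θ f v) =
      sSup {x : ℝ | ∃ S : Finset V, S.Nonempty ∧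
        x = ((E.filter fun e => e ⊆ S).card : ℝ) / (S.card : ℝ)} := by
  obtain ⟨v₀, -, hv₀⟩ := exists_max_image univ (load E θ) univ_nonempty
  have hmax : ∀ v, load E θ v ≤ load E θ v₀ := fun v => hv₀ v (mem_univ v)
  set S : Finset V := {v | load E θ v = load E θ v₀}
  have hS : S.Nonempty := ⟨v₀, mem_filter.mpr ⟨mem_univ _, rfl⟩⟩
  have hload : IsGreatest (Set.range (load E θ)) (load E θ v₀) :=
    ⟨⟨v₀, rfl⟩, by rintro _ ⟨v, rfl⟩; exact hmax v⟩
  have hdensity : IsGreatest {x : ℝ | ∃ T : Finset V, T.Nonempty ∧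
      x = ((inducedEdges E T).card : ℝ) / T.card} (load E θ v₀) :=
    ⟨⟨S, hS, (card_inducedEdges_div_card_eq hθsum hbal hS (fun v hv => (mem_filter.mp hv).2)
        fun v hv => (hmax v).lt_of_ne fun h => hv (mem_filter.mpr ⟨mem_univ _, h⟩)).symm⟩,
      by rintro _ ⟨T, hT, rfl⟩; exact card_inducedEdges_div_card_le hθ0 hθsum hmax hT⟩
  exact hload.csSup_eq.trans hdensity.csSup_eq.symm
end

section
/- Let H be a finite hypergraph, ε > 0, and b: V(H) → ℝ a baseload. Then there exists an allocation θ: {(e,i) : e ∈ E(H), i ∈ e} → [0,1] satisfying, for every edge e and every i ∈ e, θ(e,i) = exp(−∂_b θ(i)/ε) / Σ_{j ∈ e} exp(−∂_b θ(j)/ε), where ∂_b θ(i) = b(i) + Σ_{e ∋ i} θ(e,i). (Such a θ automatically satisfies Σ_{i∈e} θ(e,i) = 1 for every e.) -/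
/-!
A minimiser `θ` of the convex potential
`Φ θ = ∑ᵢ (∂_b θ(i))² / 2 + ε ∑_{e, i ∈ e} θ(e,i) log θ(e,i)`
exists on the compact product of the edge simplices. Since `x log x` is convex and the quadratic
part is smooth, `θ` also minimises the functional linearised at its own loads, and this splits
over the edges into the Gibbs free energies `∑_{i ∈ e} (∂_b θ(i) xᵢ + ε xᵢ log xᵢ)`. Writing such a
free energy as `ε · KL(x ‖ p) - ε log Z` with `p` the softmax of `-∂_b θ / ε` shows (Gibbs'
inequality) that `p` is its unique minimiser on the simplex, so `θ(e, ·) = p`.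
-/

open Real Finset InformationTheory Filter Topology

namespace EpsilonBalanced

section Gibbs

variable {ι : Type*} (s : Finset ι) (c : ι → ℝ) (ε : ℝ)

noncomputable def freeEnergy (x : ι → ℝ) : ℝ :=
  ∑ k ∈ s, (c k * x k + ε * (x k * log (x k)))

noncomputable def gibbs (k : ι) : ℝ :=
  exp (-c k / ε) / ∑ j ∈ s, exp (-c j / ε)

variable {s}

lemma gibbs_pos (hs : s.Nonempty) (k : ι) : 0 < gibbs s c ε k :=
  div_pos (exp_pos _) (sum_pos (fun _ _ => exp_pos _) hs)

lemma sum_gibbs (hs : s.Nonempty) : ∑ k ∈ s, gibbs s c ε k = 1 := by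
  simp only [gibbs]
  rw [← sum_div, div_self (sum_pos (fun _ _ => exp_pos _) hs).ne']

lemma log_gibbs (hs : s.Nonempty) (k : ι) :
    log (gibbs s c ε k) = -c k / ε - log (∑ j ∈ s, exp (-c j / ε)) := by
  rw [gibbs, log_div (exp_pos _).ne' (sum_pos (fun _ _ => exp_pos _) hs).ne', log_exp]

lemma freeEnergy_eq_sum_klFun (hε : ε ≠ 0) (hs : s.Nonempty) {x : ι → ℝ}
    (hx : ∑ k ∈ s, x k = 1) :
    freeEnergy s c ε x = ε * ∑ k ∈ s, gibbs s c ε k * klFun (x k / gibbs s c ε k)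
      - ε * log (∑ j ∈ s, exp (-c j / ε)) := by
  set Z := ∑ j ∈ s, exp (-c j / ε)
  have hterm : ∀ k ∈ s, c k * x k + ε * (x k * log (x k)) =
      ε * (gibbs s c ε k * klFun (x k / gibbs s c ε k))
        - ε * (gibbs s c ε k - x k) - ε * log Z * x k := by
    intro k _
    have hp := (gibbs_pos c ε hs k).ne'
    have hlog : x k * log (x k / gibbs s c ε k) = x k * log (x k) + x k * (c k / ε + log Z) := by
      rcases eq_or_ne (x k) 0 with h0 | h0
      · simp [h0]
      · rw [log_div h0 hp, log_gibbs c ε hs]; ring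
    have hkl : gibbs s c ε k * klFun (x k / gibbs s c ε k) =
        x k * log (x k / gibbs s c ε k) + gibbs s c ε k - x k := by
      rw [klFun]; field_simp
    rw [hkl, hlog]
    field_simp
    ring
  rw [freeEnergy, sum_congr rfl hterm, sum_sub_distrib, sum_sub_distrib, ← mul_sum, ← mul_sum,
    ← mul_sum, sum_sub_distrib, sum_gibbs c ε hs, hx]
  ring

lemma eq_gibbs_of_freeEnergy_le (hε : 0 < ε) (hs : s.Nonempty) {x : ι → ℝ}
    (hx0 : ∀ k ∈ s, 0 ≤ x k) (hx1 : ∑ k ∈ s, x k = 1)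
    (hle : freeEnergy s c ε x ≤ freeEnergy s c ε (gibbs s c ε)) :
    ∀ k ∈ s, x k = gibbs s c ε k := by
  have hp := gibbs_pos c ε hs
  rw [freeEnergy_eq_sum_klFun c ε hε.ne' hs hx1,
    freeEnergy_eq_sum_klFun c ε hε.ne' hs (sum_gibbs c ε hs)] at hle
  simp only [div_self (hp _).ne', klFun_one, mul_zero, sum_const_zero, sub_le_sub_iff_right] at hle
  have hnonneg : ∀ k ∈ s, 0 ≤ gibbs s c ε k * klFun (x k / gibbs s c ε k) :=
    fun k hk => mul_nonneg (hp k).le (klFun_nonneg (div_nonneg (hx0 k hk) (hp k).le))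
  have hzero := (sum_eq_zero_iff_of_nonneg hnonneg).mp
    (le_antisymm (nonpos_of_mul_nonpos_right hle hε) (sum_nonneg hnonneg))
  intro k hk
  have hkl := (mul_eq_zero.mp (hzero k hk)).resolve_left (hp k).ne'
  rwa [klFun_eq_zero_iff (div_nonneg (hx0 k hk) (hp k).le), div_eq_one_iff_eq (hp k).ne'] at hkl

end Gibbs

lemma nonneg_of_forall_mul_add_sq_mul_nonneg {a b : ℝ}
    (h : ∀ t ∈ Set.Ioc (0 : ℝ) 1, 0 ≤ t * a + t ^ 2 * b) : 0 ≤ a := by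
  have hev : ∀ᶠ t in 𝓝[>] (0 : ℝ), 0 ≤ a + t * b := by
    filter_upwards [Ioc_mem_nhdsGT one_pos] with t ht
    exact nonneg_of_mul_nonneg_right (by linear_combination h t ht) ht.1
  have hcont : Continuous fun t : ℝ => a + t * b := by fun_prop
  have hlim : Tendsto (fun t : ℝ => a + t * b) (𝓝[>] 0) (𝓝 a) := by
    simpa using (hcont.tendsto 0).mono_left nhdsWithin_le_nhds
  exact ge_of_tendsto hlim hev

lemma mul_log_add_mul_sub_le {x y t : ℝ} (hx : 0 ≤ x) (hy : 0 ≤ y) (ht : t ∈ Set.Icc (0 : ℝ) 1) :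
    (x + t * (y - x)) * log (x + t * (y - x)) ≤ x * log x + t * (y * log y - x * log x) := by
  have h := convexOn_mul_log.2 (Set.mem_Ici.mpr hx) (Set.mem_Ici.mpr hy) (sub_nonneg.mpr ht.2) ht.1
    (sub_add_cancel 1 t)
  simp only [smul_eq_mul] at h
  rw [show x + t * (y - x) = (1 - t) * x + t * y by ring]
  linarith

section Allocations

variable {V : Type*} (E : Finset (Finset V))

/-- Coordinates `θ f k` with `f ∉ E` or `k ∉ f` play no role; boxing them keeps the set compact. -/
def allocations : Set (Finset V → V → ℝ) :=
  {θ | (∀ f k, θ f k ∈ Set.Icc 0 1) ∧ ∀ e ∈ E, ∑ k ∈ e, θ e k = 1}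

variable {E}

lemma isCompact_allocations : IsCompact (allocations E) := by
  have hbox : IsCompact {θ : Finset V → V → ℝ | ∀ f k, θ f k ∈ Set.Icc 0 1} := by
    simpa [Set.pi] using isCompact_univ_pi fun _ : Finset V =>
      isCompact_univ_pi fun _ : V => isCompact_Icc (a := (0 : ℝ)) (b := 1)
  have hsum : IsClosed {θ : Finset V → V → ℝ | ∀ e ∈ E, ∑ k ∈ e, θ e k = 1} := by
    simp only [Set.ofPred_forall]
    exact isClosed_biInter fun e _ => isClosed_eq (by fun_prop) continuous_const
  exact hbox.inter_right hsum

lemma convex_allocations : Convex ℝ (allocations E) := by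
  rintro θ ⟨hθ, hθE⟩ σ ⟨hσ, hσE⟩ a c ha hc hac
  refine ⟨fun f k => (convex_Icc 0 1) (hθ f k) (hσ f k) ha hc hac, fun e he => ?_⟩
  simp [sum_add_distrib, ← mul_sum, hθE e he, hσE e he, hac]

lemma allocations_nonempty [DecidableEq V] (hE : ∀ e ∈ E, e.Nonempty) :
    (allocations E).Nonempty := by
  refine ⟨fun f k => if k ∈ f then ((#f : ℕ) : ℝ)⁻¹ else 0, fun f k => ?_, fun e he => ?_⟩
  · dsimp only
    split_ifs with hk
    · exact ⟨by positivity, inv_le_one_of_one_le₀ (by exact_mod_cast card_pos.mpr ⟨k, hk⟩)⟩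
    · simp
  · rw [sum_ite_of_true fun _ h => h, sum_const, nsmul_eq_mul,
      mul_inv_cancel₀ (by exact_mod_cast (hE e he).card_pos.ne')]

end Allocations

section Potential

variable {V : Type*} [DecidableEq V] (E : Finset (Finset V)) (b : V → ℝ)

def load (θ : Finset V → V → ℝ) (k : V) : ℝ :=
  b k + ∑ f ∈ E.filter (fun f => k ∈ f), θ f k

lemma load_add_smul_sub (θ σ : Finset V → V → ℝ) (t : ℝ) (k : V) :
    load E b (θ + t • (σ - θ)) k = load E b θ k + t * (load E b σ k - load E b θ k) := by
  simp only [load, Pi.add_apply, Pi.smul_apply, Pi.sub_apply, smul_eq_mul, sum_add_distrib,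
    ← mul_sum, sum_sub_distrib]
  ring

variable [Fintype V]

lemma sum_mul_sum_filter_mem (w : V → ℝ) (d : Finset V → V → ℝ) :
    ∑ k, w k * ∑ f ∈ E.filter (fun f => k ∈ f), d f k = ∑ f ∈ E, ∑ k ∈ f, w k * d f k := by
  simp_rw [mul_sum, sum_filter]
  rw [sum_comm]
  refine sum_congr rfl fun f _ => ?_
  rw [sum_ite_mem, univ_inter]

noncomputable def potential (ε : ℝ) (θ : Finset V → V → ℝ) : ℝ :=
  ∑ k, load E b θ k ^ 2 / 2 + ε * ∑ f ∈ E, ∑ k ∈ f, θ f k * log (θ f k)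

lemma continuous_potential (ε : ℝ) : Continuous (potential E b ε) := by
  unfold potential load
  fun_prop

variable {E b}

lemma potential_add_smul_sub_le {ε : ℝ} (hε : 0 ≤ ε) {θ σ : Finset V → V → ℝ}
    (hθ : θ ∈ allocations E) (hσ : σ ∈ allocations E) {t : ℝ} (ht : t ∈ Set.Icc (0 : ℝ) 1) :
    potential E b ε (θ + t • (σ - θ)) ≤ potential E b ε θ
      + t * (∑ f ∈ E, freeEnergy f (load E b θ) ε (σ f)
        - ∑ f ∈ E, freeEnergy f (load E b θ) ε (θ f))
      + t ^ 2 * ∑ k, (load E b σ k - load E b θ k) ^ 2 / 2 := by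
  set L := load E b θ
  set L' := load E b σ
  have hlin : ∑ k, L k * (L' k - L k) = ∑ f ∈ E, ∑ k ∈ f, L k * (σ f k - θ f k) := by
    rw [← sum_mul_sum_filter_mem]
    refine sum_congr rfl fun k _ => ?_
    simp only [L, L', load, add_sub_add_left_eq_sub, sum_sub_distrib]
  have hquad : ∑ k, load E b (θ + t • (σ - θ)) k ^ 2 / 2 = ∑ k, L k ^ 2 / 2
      + t * ∑ f ∈ E, ∑ k ∈ f, L k * (σ f k - θ f k) + t ^ 2 * ∑ k, (L' k - L k) ^ 2 / 2 := by
    rw [← hlin, mul_sum, mul_sum, ← sum_add_distrib, ← sum_add_distrib]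
    refine sum_congr rfl fun k _ => ?_
    rw [load_add_smul_sub]
    ring
  have hent : ∑ f ∈ E, ∑ k ∈ f, (θ + t • (σ - θ)) f k * log ((θ + t • (σ - θ)) f k)
      ≤ ∑ f ∈ E, ∑ k ∈ f, θ f k * log (θ f k)
        + t * (∑ f ∈ E, ∑ k ∈ f, σ f k * log (σ f k) - ∑ f ∈ E, ∑ k ∈ f, θ f k * log (θ f k)) := by
    calc _ ≤ ∑ f ∈ E, ∑ k ∈ f,
          (θ f k * log (θ f k) + t * (σ f k * log (σ f k) - θ f k * log (θ f k))) :=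
          sum_le_sum fun f _ => sum_le_sum fun k _ =>
            mul_log_add_mul_sub_le (hθ.1 f k).1 (hσ.1 f k).1 ht
      _ = _ := by simp only [sum_add_distrib, ← mul_sum, sum_sub_distrib]
  have hfree : ∑ f ∈ E, freeEnergy f L ε (σ f) - ∑ f ∈ E, freeEnergy f L ε (θ f)
      = ∑ f ∈ E, ∑ k ∈ f, L k * (σ f k - θ f k) + ε * (∑ f ∈ E, ∑ k ∈ f, σ f k * log (σ f k)
        - ∑ f ∈ E, ∑ k ∈ f, θ f k * log (θ f k)) := by
    simp only [freeEnergy, mul_sum, ← sum_sub_distrib, ← sum_add_distrib]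
    exact sum_congr rfl fun f _ => sum_congr rfl fun k _ => by ring
  unfold potential
  rw [hquad, hfree]
  linarith [mul_le_mul_of_nonneg_left hent hε]

lemma sum_freeEnergy_le_of_isMinOn {ε : ℝ} (hε : 0 ≤ ε) {θ σ : Finset V → V → ℝ}
    (hθ : θ ∈ allocations E) (hmin : IsMinOn (potential E b ε) (allocations E) θ)
    (hσ : σ ∈ allocations E) :
    ∑ f ∈ E, freeEnergy f (load E b θ) ε (θ f) ≤ ∑ f ∈ E, freeEnergy f (load E b θ) ε (σ f) := by
  have h : ∀ t ∈ Set.Ioc (0 : ℝ) 1, 0 ≤ t * (∑ f ∈ E, freeEnergy f (load E b θ) ε (σ f)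
      - ∑ f ∈ E, freeEnergy f (load E b θ) ε (θ f))
      + t ^ 2 * ∑ k, (load E b σ k - load E b θ k) ^ 2 / 2 := by
    intro t ht
    have hmem := convex_allocations.add_smul_sub_mem hθ hσ (Set.Ioc_subset_Icc_self ht)
    linarith [isMinOn_iff.mp hmin _ hmem,
      potential_add_smul_sub_le (b := b) hε hθ hσ (Set.Ioc_subset_Icc_self ht)]
  linarith [nonneg_of_forall_mul_add_sq_mul_nonneg h]

lemma freeEnergy_le_of_isMinOn {ε : ℝ} (hε : 0 ≤ ε) {θ : Finset V → V → ℝ}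
    (hθ : θ ∈ allocations E) (hmin : IsMinOn (potential E b ε) (allocations E) θ)
    {e : Finset V} (he : e ∈ E) {x : V → ℝ} (hx0 : ∀ k ∈ e, 0 ≤ x k) (hx1 : ∑ k ∈ e, x k = 1) :
    freeEnergy e (load E b θ) ε (θ e) ≤ freeEnergy e (load E b θ) ε x := by
  -- cut `x` off outside `e`, so that the modified allocation stays in the box
  set y := e.piecewise x 0
  have hy : ∀ k ∈ e, y k = x k := fun k hk => piecewise_eq_of_mem _ _ _ hk
  have hσ : Function.update θ e y ∈ allocations E := by
    refine ⟨fun f k => ?_, fun f hf => ?_⟩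
    · rcases eq_or_ne f e with rfl | hfe
      · rw [Function.update_self]
        by_cases hk : k ∈ f
        · rw [hy k hk, ← hx1]
          exact ⟨hx0 k hk, single_le_sum hx0 hk⟩
        · simp [y, hk]
      · rw [Function.update_of_ne hfe]
        exact hθ.1 f k
    · rcases eq_or_ne f e with rfl | hfe
      · rw [Function.update_self, ← hx1]
        exact sum_congr rfl hy
      · rw [Function.update_of_ne hfe]
        exact hθ.2 f hf
  have h := sum_freeEnergy_le_of_isMinOn hε hθ hmin hσ
  have hrest : ∑ f ∈ E.erase e, freeEnergy f (load E b θ) ε (Function.update θ e y f)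
      = ∑ f ∈ E.erase e, freeEnergy f (load E b θ) ε (θ f) :=
    sum_congr rfl fun f hf => by rw [Function.update_of_ne (ne_of_mem_erase hf)]
  have hfe : freeEnergy e (load E b θ) ε y = freeEnergy e (load E b θ) ε x :=
    sum_congr rfl fun k hk => by rw [hy k hk]
  rw [← sum_erase_add E _ he, ← sum_erase_add E _ he, hrest, Function.update_self, hfe] at h
  linarith

end Potential

end EpsilonBalanced

open EpsilonBalanced in
theorem exists_epsilon_balanced_allocation
    {V : Type*} [Fintype V] [DecidableEq V]
    (E : Finset (Finset V)) (hE : ∀ e ∈ E, e.Nonempty)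
    (ε : ℝ) (hε : 0 < ε) (b : V → ℝ) :
    ∃ θ : Finset V → V → ℝ,
      (∀ e ∈ E, ∀ i ∈ e, 0 ≤ θ e i ∧ θ e i ≤ 1) ∧
      ∀ e ∈ E, ∀ i ∈ e,
        θ e i =
          Real.exp (-(b i + ∑ f ∈ E.filter (fun f => i ∈ f), θ f i) / ε) /
            ∑ j ∈ e,
              Real.exp (-(b j + ∑ f ∈ E.filter (fun f => j ∈ f), θ f j) / ε) := by
  obtain ⟨θ, hθ, hmin⟩ := isCompact_allocations.exists_isMinOn (allocations_nonempty hE)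
    (continuous_potential E b ε).continuousOn
  refine ⟨θ, fun e _ i _ => hθ.1 e i, fun e he i hi => ?_⟩
  have hle := freeEnergy_le_of_isMinOn hε.le hθ hmin he
    (fun k _ => (gibbs_pos (load E b θ) ε (hE e he) k).le) (sum_gibbs (load E b θ) ε (hE e he))
  exact eq_gibbs_of_freeEnergy_le _ ε hε (hE e he) (fun k _ => (hθ.1 e k).1) (hθ.2 e he) hle i hi
end

section
/- Let θ, θ' ∈ [0,1]^{e} be two probability vectors indexed by a finite edge e (Σ θ = Σ θ' = 1), and let l, l': e → ℝ be load vectors such that θ is supported on argmin l and θ' is supported on argmin l'. If min l > min l', then Σ_{i ∈ e} (θ_i − θ'_i)·1[l_i > l'_i] ≤ Σ_{i ∈ argmin l'} (θ_i − θ'_i) + Σ_{i ∈ argmin l \ argmin l'} θ_i = 0, i.e. the sum is at most 0; and if min l ≤ min l', the same sum is also at most 0. -/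
/-!
With `A = {i | l' i < l i}` the left-hand sum is `θ(A) - θ'(A)`. If `min l' < min l`, then `A`
contains `argmin l'`, which carries all of `θ'`, so `θ'(A) = 1 ≥ θ(A)`. If `min l ≤ min l'`, then
`A` misses `argmin l`, which carries all of `θ`, so `θ(A) = 0`. The right-hand side splits `θ`
along `argmin l'` and its complement and equals `θ(e) - θ'(e) = 0`.
-/

open Finset

namespace Finset

variable {ι : Type*} [Fintype ι] (θ θ' : ι → ℝ)

theorem sum_sub_mul_ite_eq_sum_filter_sub (p : ι → Prop) [DecidablePred p] :
    ∑ i, (θ i - θ' i) * (if p i then (1 : ℝ) else 0) =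
      ∑ i with p i, θ i - ∑ i with p i, θ' i := by
  simp only [mul_ite, mul_one, mul_zero, ← sum_filter, sum_sub_distrib]

variable {θ θ'}

theorem sum_filter_sub_add_sum_filter_eq_sum_sub {p q : ι → Prop} [DecidablePred p]
    [DecidablePred q] (hθ : ∀ i, ¬ p i → θ i = 0) (hθ' : ∀ i, ¬ q i → θ' i = 0) :
    (∑ i with q i, (θ i - θ' i)) + ∑ i with p i ∧ ¬ q i, θ i = ∑ i, θ i - ∑ i, θ' i := by
  have hθ'q : ∑ i with q i, θ' i = ∑ i, θ' i :=
    sum_filter_of_ne fun i _ h ↦ not_not.1 (mt (hθ' i) h)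
  have hθp : ∑ i with p i ∧ ¬ q i, θ i = ∑ i with ¬ q i, θ i := by
    conv_rhs => rw [← sum_filter_of_ne (p := p) fun i _ h ↦ not_not.1 (mt (hθ i) h)]
    rw [filter_filter]
    simp only [and_comm]
  rw [sum_sub_distrib, hθ'q, hθp, sub_add_eq_add_sub, sum_filter_add_sum_filter_not]

theorem sum_sub_mul_ite_nonpos_of_right_supported {p : ι → Prop} [DecidablePred p]
    (hθ : ∀ i, 0 ≤ θ i) (hθ' : ∀ i, ¬ p i → θ' i = 0) (hsum : ∑ i, θ i = ∑ i, θ' i) :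
    ∑ i, (θ i - θ' i) * (if p i then (1 : ℝ) else 0) ≤ 0 := by
  have hθ'p : ∑ i with p i, θ' i = ∑ i, θ' i :=
    sum_filter_of_ne fun i _ h ↦ not_not.1 (mt (hθ' i) h)
  have hθp : ∑ i with p i, θ i ≤ ∑ i, θ i :=
    sum_le_sum_of_subset_of_nonneg (filter_subset _ _) fun i _ _ ↦ hθ i
  rw [sum_sub_mul_ite_eq_sum_filter_sub, hθ'p, ← hsum]
  linarith

theorem sum_sub_mul_ite_nonpos_of_left_vanishes {p : ι → Prop} [DecidablePred p]
    (hθ' : ∀ i, 0 ≤ θ' i) (hθ : ∀ i, p i → θ i = 0) :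
    ∑ i, (θ i - θ' i) * (if p i then (1 : ℝ) else 0) ≤ 0 := by
  rw [sum_sub_mul_ite_eq_sum_filter_sub, sum_eq_zero fun i hi ↦ hθ i (mem_filter.1 hi).2,
    zero_sub, neg_nonpos]
  exact sum_nonneg fun i _ ↦ hθ' i

end Finset

theorem balanced_comparison_key_inequality
    {ι : Type*} [Fintype ι] [Nonempty ι]
    (θ θ' l l' : ι → ℝ)
    (hθ : ∀ i, 0 ≤ θ i) (hθ' : ∀ i, 0 ≤ θ' i)
    (hsum : ∑ i, θ i = 1) (hsum' : ∑ i, θ' i = 1)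
    (hsupp : ∀ i, l i ≠ Finset.univ.inf' Finset.univ_nonempty l → θ i = 0)
    (hsupp' : ∀ i, l' i ≠ Finset.univ.inf' Finset.univ_nonempty l' → θ' i = 0) :
    (Finset.univ.inf' Finset.univ_nonempty l' <
        Finset.univ.inf' Finset.univ_nonempty l →
      (∑ i, (θ i - θ' i) * (if l' i < l i then (1 : ℝ) else 0)) ≤
          ((∑ i ∈ Finset.univ.filter
              (fun i => l' i = Finset.univ.inf' Finset.univ_nonempty l'),
              (θ i - θ' i)) +
            ∑ i ∈ Finset.univ.filter
              (fun i => l i = Finset.univ.inf' Finset.univ_nonempty l ∧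
                l' i ≠ Finset.univ.inf' Finset.univ_nonempty l'), θ i) ∧
        ((∑ i ∈ Finset.univ.filter
              (fun i => l' i = Finset.univ.inf' Finset.univ_nonempty l'),
              (θ i - θ' i)) +
            ∑ i ∈ Finset.univ.filter
              (fun i => l i = Finset.univ.inf' Finset.univ_nonempty l ∧
                l' i ≠ Finset.univ.inf' Finset.univ_nonempty l'), θ i) = 0) ∧
    (Finset.univ.inf' Finset.univ_nonempty l ≤
        Finset.univ.inf' Finset.univ_nonempty l' →
      (∑ i, (θ i - θ' i) * (if l' i < l i then (1 : ℝ) else 0)) ≤ 0) := by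
  set m := univ.inf' univ_nonempty l
  set m' := univ.inf' univ_nonempty l'
  have hml (i : ι) : m ≤ l i := inf'_le _ (mem_univ i)
  have hml' (i : ι) : m' ≤ l' i := inf'_le _ (mem_univ i)
  refine ⟨fun hlt ↦ ?_, fun hle ↦ ?_⟩
  · have hrhs := sum_filter_sub_add_sum_filter_eq_sum_sub hsupp hsupp'
    rw [hsum, hsum', sub_self] at hrhs
    refine ⟨hrhs.symm ▸ ?_, hrhs⟩
    refine sum_sub_mul_ite_nonpos_of_right_supported hθ (fun i hi ↦ ?_) (hsum.trans hsum'.symm)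
    exact hsupp' i fun h ↦ hi (h ▸ hlt.trans_le (hml i))
  · exact sum_sub_mul_ite_nonpos_of_left_vanishes hθ' fun i hi ↦
      hsupp i fun h ↦ (hi.trans_le' (hle.trans (hml' i))).ne' h
end
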